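/- Let H and J be ultraparallel hyperplanes in ℍ^d, and let p be a point in the open half-space bounded by H that does not contain J. Then dist(p, H) < dist(p, J). -/

import Mathlib

noncomputable section

namespace HypSpace

/-- Inverse hyperbolic cosine. -/
def arcosh (x : ℝ) : ℝ := Real.log (x + Real.sqrt (x ^ 2 - 1))

/-- The Minkowski bilinear form on `ℝ^{d+1}` (signature `(d,1)`, the last
coordinate being timelike). -/
def mink (d : ℕ) (x y : EuclideanSpace ℝ (Fin (d + 1))) : ℝ :=
  (∑ i : Fin d, x i.castSucc * y i.castSucc) - x (Fin.last d) * y (Fin.last d)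

/-- The hyperboloid model of `d`-dimensional hyperbolic space: the upper sheet
of the two-sheeted hyperboloid `mink x x = -1`. -/
def Pt (d : ℕ) : Type := {x : EuclideanSpace ℝ (Fin (d + 1)) // mink d x x = -1 ∧ 0 < x (Fin.last d)}

variable {d : ℕ}

/-- Hyperbolic distance between two points of `ℍ^d`. -/
def hdist (p q : Pt d) : ℝ := arcosh (-(mink d p.1 q.1))

/-- The geodesic segment between `a` and `b`, described metrically via betweenness
(hyperbolic space is uniquely geodesic). -/
def seg (a b : Pt d) : Set (Pt d) := {p | hdist a p + hdist p b = hdist a b}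

/-- A set is (geodesically) convex if it contains the segment between any two of its points. -/
def IsConvexSet (C : Set (Pt d)) : Prop := ∀ a ∈ C, ∀ b ∈ C, seg a b ⊆ C

/-- The convex hull: the smallest convex set containing `A`. -/
def chull (A : Set (Pt d)) : Set (Pt d) := ⋂₀ {C | IsConvexSet C ∧ A ⊆ C}

/-- The totally geodesic hyperplane with (spacelike) normal vector `v`. -/
def plane (v : EuclideanSpace ℝ (Fin (d + 1))) : Set (Pt d) := {p | mink d v p.1 = 0}

/-- A hyperplane of `ℍ^d`: the trace on the hyperboloid of a linear hyperplane
with spacelike unit normal. -/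
def IsHyperplane (H : Set (Pt d)) : Prop := ∃ v, mink d v v = 1 ∧ H = plane v

/-- Distance from a point to a set. -/
def distPS (p : Pt d) (S : Set (Pt d)) : ℝ := sInf (hdist p '' S)

/-- Distance between two sets. -/
def distSS (A B : Set (Pt d)) : ℝ := sInf {r | ∃ a ∈ A, ∃ b ∈ B, hdist a b = r}

/-- `h` is the orthogonal projection of `g` onto `H`: the point of `H`
realizing the distance from `g` to `H`.  For a hyperplane `H` with `a ∈ H`,
`IsProj b H a` also expresses that `H` is orthogonal to the segment `ab` at `a`. -/
def IsProj (g : Pt d) (H : Set (Pt d)) (h : Pt d) : Prop :=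
  h ∈ H ∧ ∀ k ∈ H, hdist g h ≤ hdist g k

/-- Two hyperplanes are ultraparallel if they are disjoint and not asymptotically
parallel (their distance is positive, i.e. they admit a common perpendicular). -/
def Ultraparallel (H J : Set (Pt d)) : Prop :=
  IsHyperplane H ∧ IsHyperplane J ∧ H ∩ J = ∅ ∧ 0 < distSS H J

/-- `p` is an interior point of `C`. -/
def IsIntr (C : Set (Pt d)) (p : Pt d) : Prop := ∃ ε > 0, ∀ q, hdist p q < ε → q ∈ C

/-- `p` is a boundary point of the (closed) set `C`. -/
def IsBdry (C : Set (Pt d)) (p : Pt d) : Prop := p ∈ C ∧ ¬ IsIntr C p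

/-- `C` is bounded. -/
def IsBddSet (C : Set (Pt d)) : Prop := ∃ R, ∀ a ∈ C, ∀ b ∈ C, hdist a b ≤ R

/-- `C` is closed. -/
def IsClosedSet (C : Set (Pt d)) : Prop :=
  ∀ p : Pt d, (∀ ε > 0, ∃ q ∈ C, hdist p q < ε) → p ∈ C

/-- A convex body: a compact (closed and bounded) convex set with nonempty interior. -/
def IsBody (C : Set (Pt d)) : Prop :=
  IsConvexSet C ∧ IsBddSet C ∧ IsClosedSet C ∧ ∃ p, IsIntr C p

/-- The hyperplane `H` supports `C`: it meets `C` but misses its interior. -/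
def Supports (H C : Set (Pt d)) : Prop :=
  IsHyperplane H ∧ (H ∩ C).Nonempty ∧ ∀ p, IsIntr C p → p ∉ H

/-- The width of `C` determined by `H`, as the maximum distance from `H`
to a point of `C`. -/
def width (H C : Set (Pt d)) : ℝ := sSup ((fun c => distPS c H) '' C)

/-- The width of `C` determined by `H`, as the distance from `H` to a farthest
supporting hyperplane of `C` ultraparallel to `H`. -/
def widthUP (H C : Set (Pt d)) : ℝ :=
  sSup {r | ∃ J, Supports J C ∧ Ultraparallel H J ∧ distSS H J = r}

/-- The thickness of `C`: the minimum width over supporting hyperplanes. -/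
def thickness (C : Set (Pt d)) : ℝ := sInf {r | ∃ H, Supports H C ∧ width H C = r}

/-- The diameter of `C`. -/
def diam (C : Set (Pt d)) : ℝ := sSup {r | ∃ a ∈ C, ∃ b ∈ C, hdist a b = r}

/-- A body of constant width `δ`. -/
def ConstWidth (W : Set (Pt d)) (δ : ℝ) : Prop :=
  IsBody W ∧ ∀ H, Supports H W → width H W = δ

/-- A complete set of diameter `δ`. -/
def CompleteSet (C : Set (Pt d)) (δ : ℝ) : Prop :=
  diam C = δ ∧ ∀ x, x ∉ C → diam (C ∪ {x}) > δ

/-- A body of constant diameter `δ`. -/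
def ConstDiam (C : Set (Pt d)) (δ : ℝ) : Prop :=
  diam C = δ ∧ ∀ p, IsBdry C p → ∃ p' ∈ C, hdist p p' = δ

/-!
For a unit spacelike normal `v`, the signed distance from `p` to the hyperplane `v^⊥` is
`arsinh ⟨v, p⟩`. The reverse Cauchy–Schwarz inequality, applied to the components of `p` and `q`
orthogonal to `v`, gives `cosh (arsinh ⟨v, p⟩ - arsinh ⟨v, q⟩) ≤ -⟨p, q⟩ = cosh d(p, q)`, so the
signed distance is 1-Lipschitz. For `q ∈ J`, on the other side of `H`, this yields
`d(p, q) ≥ d(p, H) + d(q, H) ≥ d(p, H) + d(H, J)`, and `d(H, J) > 0`.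
-/

open Real

section Minkowski

variable (x y z : EuclideanSpace ℝ (Fin (d + 1)))

lemma mink_comm : mink d x y = mink d y x := by
  simp only [mink, mul_comm]

lemma mink_sub_left : mink d (x - y) z = mink d x z - mink d y z := by
  simp only [mink, PiLp.sub_apply, sub_mul, Finset.sum_sub_distrib]
  ring

lemma mink_smul_left (c : ℝ) : mink d (c • x) y = c * mink d x y := by
  simp only [mink, PiLp.smul_apply, smul_eq_mul, mul_assoc, ← Finset.mul_sum]
  ring

lemma mink_sub_right : mink d x (y - z) = mink d x y - mink d x z := by
  rw [mink_comm, mink_sub_left, mink_comm y, mink_comm z]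

lemma mink_smul_right (c : ℝ) : mink d x (c • y) = c * mink d x y := by
  rw [mink_comm, mink_smul_left, mink_comm]

variable {x y z}

lemma mink_self_nonneg_of_last_eq_zero (hz : z (Fin.last d) = 0) : 0 ≤ mink d z z := by
  simp only [mink, hz, mul_zero, sub_zero]
  exact Finset.sum_nonneg fun i _ => mul_self_nonneg _

/-- With `r = y_d / x_d`, the vector `y - r • x` has no time component, so its Minkowski square
is nonnegative. -/
lemma mink_self_sub_smul_nonneg (hx : x (Fin.last d) ≠ 0) :
    0 ≤ mink d y y - 2 * (y (Fin.last d) / x (Fin.last d)) * mink d x y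
      + (y (Fin.last d) / x (Fin.last d)) ^ 2 * mink d x x := by
  set r := y (Fin.last d) / x (Fin.last d)
  have h := mink_self_nonneg_of_last_eq_zero (z := y - r • x) (by simp [r, hx])
  simp only [mink_sub_left, mink_sub_right, mink_smul_left, mink_smul_right] at h
  rw [mink_comm y x] at h
  linarith

lemma last_ne_zero_of_mink_self_neg (hx : mink d x x < 0) : x (Fin.last d) ≠ 0 :=
  fun h => (mink_self_nonneg_of_last_eq_zero h).not_gt hx

/-- Reverse Cauchy–Schwarz inequality for a timelike vector `x`. -/
lemma mink_self_mul_mink_self_le_sq (hx : mink d x x < 0) :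
    mink d x x * mink d y y ≤ mink d x y ^ 2 := by
  have h := mink_self_sub_smul_nonneg (y := y) (last_ne_zero_of_mink_self_neg hx)
  set r := y (Fin.last d) / x (Fin.last d)
  nlinarith [sq_nonneg (r * mink d x x - mink d x y), mul_nonpos_of_nonpos_of_nonneg hx.le h]

lemma mink_neg_iff_last_pos (hx : mink d x x < 0) (hxl : 0 < x (Fin.last d))
    (hy : mink d y y < 0) : mink d x y < 0 ↔ 0 < y (Fin.last d) := by
  have h := mink_self_sub_smul_nonneg (y := y) hxl.ne'
  set r := y (Fin.last d) / x (Fin.last d)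
  have hr_pos : 0 < r ↔ 0 < y (Fin.last d) := div_pos_iff_of_pos_right hxl
  constructor
  · intro hxy
    by_contra! hyl
    have hr_nonpos : r ≤ 0 := div_nonpos_of_nonpos_of_nonneg hyl hxl.le
    nlinarith [mul_nonneg (neg_nonneg.2 hr_nonpos) (neg_nonneg.2 hxy.le), sq_nonneg r]
  · intro hyl
    by_contra! hxy
    nlinarith [mul_nonneg (hr_pos.2 hyl).le hxy, sq_nonneg r]

lemma sqrt_mul_sqrt_le_neg_mink (hx : mink d x x < 0) (hxl : 0 < x (Fin.last d))
    (hy : mink d y y < 0) (hyl : 0 < y (Fin.last d)) :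
    √(-mink d x x) * √(-mink d y y) ≤ -mink d x y := by
  have hxy := (mink_neg_iff_last_pos hx hxl hy).2 hyl
  rw [← sqrt_mul (neg_nonneg.2 hx.le), sqrt_le_left (neg_nonneg.2 hxy.le)]
  nlinarith [mink_self_mul_mink_self_le_sq (y := y) hx]

end Minkowski

section Projection

variable (v : EuclideanSpace ℝ (Fin (d + 1)))

def projPerp (x : EuclideanSpace ℝ (Fin (d + 1))) : EuclideanSpace ℝ (Fin (d + 1)) :=
  x - mink d v x • v

lemma mink_projPerp_right (x y : EuclideanSpace ℝ (Fin (d + 1))) :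
    mink d x (projPerp v y) = mink d x y - mink d v x * mink d v y := by
  rw [projPerp, mink_sub_right, mink_smul_right, mink_comm v x]
  ring

variable {v}

lemma mink_projPerp_left (hv : mink d v v = 1) (x : EuclideanSpace ℝ (Fin (d + 1))) :
    mink d v (projPerp v x) = 0 := by
  rw [mink_projPerp_right, hv, one_mul, sub_self]

lemma mink_projPerp_projPerp (hv : mink d v v = 1) (x y : EuclideanSpace ℝ (Fin (d + 1))) :
    mink d (projPerp v x) (projPerp v y) = mink d x y - mink d v x * mink d v y := by
  rw [mink_projPerp_right, mink_projPerp_left hv, zero_mul, sub_zero, mink_comm,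
    mink_projPerp_right, mink_comm y]
  ring

end Projection

lemma hdist_eq_arcosh (p q : Pt d) : hdist p q = Real.arcosh (-mink d p.1 q.1) := rfl

lemma hdist_comm (p q : Pt d) : hdist p q = hdist q p := by
  rw [hdist, hdist, mink_comm]

lemma one_le_neg_mink (p q : Pt d) : 1 ≤ -mink d p.1 q.1 := by
  have h := sqrt_mul_sqrt_le_neg_mink (by rw [p.2.1]; norm_num) p.2.2
    (by rw [q.2.1]; norm_num) q.2.2
  rwa [p.2.1, q.2.1, neg_neg, sqrt_one, one_mul] at h

lemma hdist_nonneg (p q : Pt d) : 0 ≤ hdist p q := arcosh_nonneg (one_le_neg_mink p q)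

lemma distPS_le_hdist {S : Set (Pt d)} {p q : Pt d} (hq : q ∈ S) : distPS p S ≤ hdist p q :=
  csInf_le ⟨0, by rintro _ ⟨x, -, rfl⟩; exact hdist_nonneg p x⟩ ⟨q, hq, rfl⟩

lemma distSS_le_hdist {A B : Set (Pt d)} {a b : Pt d} (ha : a ∈ A) (hb : b ∈ B) :
    distSS A B ≤ hdist a b :=
  csInf_le ⟨0, by rintro _ ⟨x, -, y, -, rfl⟩; exact hdist_nonneg x y⟩ ⟨a, ha, b, hb, rfl⟩

lemma nonempty_right_of_distSS_pos {A B : Set (Pt d)} (h : 0 < distSS A B) : B.Nonempty := by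
  rw [Set.nonempty_iff_ne_empty]
  rintro rfl
  simp [distSS] at h

section Plane

variable {v : EuclideanSpace ℝ (Fin (d + 1))}

lemma mink_projPerp_self (hv : mink d v v = 1) (p : Pt d) :
    mink d (projPerp v p.1) (projPerp v p.1) = -(1 + mink d v p.1 ^ 2) := by
  rw [mink_projPerp_projPerp hv, p.2.1]
  ring

lemma mink_projPerp_self_neg (hv : mink d v v = 1) (p : Pt d) :
    mink d (projPerp v p.1) (projPerp v p.1) < 0 := by
  rw [mink_projPerp_self hv]
  nlinarith [sq_nonneg (mink d v p.1)]

lemma projPerp_last_pos (hv : mink d v v = 1) (p : Pt d) : 0 < projPerp v p.1 (Fin.last d) := by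
  refine (mink_neg_iff_last_pos (by rw [p.2.1]; norm_num) p.2.2
    (mink_projPerp_self_neg hv p)).1 ?_
  rw [mink_projPerp_right, p.2.1]
  nlinarith [sq_nonneg (mink d v p.1)]

lemma cosh_arsinh_sub_arsinh_le (hv : mink d v v = 1) (p q : Pt d) :
    cosh (arsinh (mink d v p.1) - arsinh (mink d v q.1)) ≤ -mink d p.1 q.1 := by
  have h := sqrt_mul_sqrt_le_neg_mink (mink_projPerp_self_neg hv p) (projPerp_last_pos hv p)
    (mink_projPerp_self_neg hv q) (projPerp_last_pos hv q)
  rw [mink_projPerp_self hv, mink_projPerp_self hv, neg_neg, neg_neg,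
    mink_projPerp_projPerp hv] at h
  rw [cosh_sub, cosh_arsinh, cosh_arsinh, sinh_arsinh, sinh_arsinh]
  linarith

lemma abs_arsinh_sub_arsinh_le_hdist (hv : mink d v v = 1) (p q : Pt d) :
    |arsinh (mink d v p.1) - arsinh (mink d v q.1)| ≤ hdist p q := by
  have h := cosh_arsinh_sub_arsinh_le hv p q
  rw [← cosh_abs] at h
  calc _ = Real.arcosh (cosh |arsinh (mink d v p.1) - arsinh (mink d v q.1)|) :=
        (arcosh_cosh (abs_nonneg _)).symm
    _ ≤ hdist p q := (arcosh_le_arcosh (cosh_pos _) ((cosh_pos _).trans_le h)).2 h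

lemma exists_mem_plane_hdist_eq (hv : mink d v v = 1) (p : Pt d) :
    ∃ h ∈ plane v, hdist p h = |arsinh (mink d v p.1)| := by
  have hs : cosh (arsinh (mink d v p.1)) ^ 2 = 1 + mink d v p.1 ^ 2 := by
    rw [cosh_arsinh, sq_sqrt (by positivity)]
  set s := cosh (arsinh (mink d v p.1))
  have hs_pos : 0 < s := cosh_pos _
  refine ⟨⟨s⁻¹ • projPerp v p.1, ?_, ?_⟩, ?_, ?_⟩
  · rw [mink_smul_left, mink_smul_right, mink_projPerp_self hv, ← hs]
    field_simp
  · exact mul_pos (inv_pos.2 hs_pos) (projPerp_last_pos hv p)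
  · change mink d v (s⁻¹ • projPerp v p.1) = 0
    rw [mink_smul_right, mink_projPerp_left hv, mul_zero]
  · change Real.arcosh (-mink d p.1 (s⁻¹ • projPerp v p.1)) = _
    rw [mink_smul_right, mink_projPerp_right, p.2.1, ← sq,
      show -1 - mink d v p.1 ^ 2 = -s ^ 2 by rw [hs]; ring, show -(s⁻¹ * -s ^ 2) = s by field_simp,
      ← arcosh_cosh (abs_nonneg (arsinh _)), cosh_abs]

lemma distPS_plane (hv : mink d v v = 1) (p : Pt d) :
    distPS p (plane v) = |arsinh (mink d v p.1)| := by
  obtain ⟨h, hh, hph⟩ := exists_mem_plane_hdist_eq hv p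
  refine le_antisymm (hph ▸ distPS_le_hdist hh) (le_csInf ⟨_, h, hh, rfl⟩ ?_)
  rintro _ ⟨q, hq, rfl⟩
  have hq0 : mink d v q.1 = 0 := hq
  simpa [hq0] using abs_arsinh_sub_arsinh_le_hdist hv p q

lemma distPS_plane_add_distSS_le_hdist {J : Set (Pt d)} {p q : Pt d} (hv : mink d v v = 1)
    (hp : mink d v p.1 ≤ 0) (hq : 0 ≤ mink d v q.1) (hqJ : q ∈ J) :
    distPS p (plane v) + distSS (plane v) J ≤ hdist p q := by
  obtain ⟨h, hh, hqh⟩ := exists_mem_plane_hdist_eq hv q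
  have hA := arsinh_nonpos_iff.2 hp
  have hB := arsinh_nonneg_iff.2 hq
  calc distPS p (plane v) + distSS (plane v) J
      ≤ |arsinh (mink d v p.1)| + |arsinh (mink d v q.1)| := by
        rw [distPS_plane hv, ← hqh, hdist_comm]
        exact add_le_add_right (distSS_le_hdist hh hqJ) _
    _ = |arsinh (mink d v p.1) - arsinh (mink d v q.1)| := by
        rw [abs_of_nonpos hA, abs_of_nonneg hB, abs_of_nonpos (by linarith)]
        ring
    _ ≤ hdist p q := abs_arsinh_sub_arsinh_le_hdist hv p q

end Plane

/-- Lemma 2: a point on the far side of `H` from an ultraparallel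
hyperplane `J` is strictly closer to `H` than to `J`. -/
theorem dist_lt_of_far_side {d : ℕ} (v : EuclideanSpace ℝ (Fin (d + 1)))
    (hv : mink d v v = 1) (H J : Set (Pt d)) (hH : H = plane v)
    (hU : Ultraparallel H J)
    (hJside : ∀ q ∈ J, 0 < mink d v q.1)
    (p : Pt d) (hp : mink d v p.1 < 0) :
    distPS p H < distPS p J := by
  obtain ⟨-, -, -, hHJ⟩ := hU
  subst hH
  have key : distPS p (plane v) + distSS (plane v) J ≤ distPS p J := by
    refine le_csInf ((nonempty_right_of_distSS_pos hHJ).image _) ?_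
    rintro _ ⟨q, hq, rfl⟩
    exact distPS_plane_add_distSS_le_hdist hv hp.le (hJside q hq).le hq
  linarith

end HypSpace
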